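/- arXiv:1301.2781 — 6 statements merged into one kernel-verified Lean document; each statement's English description precedes it below -/
import Mathlib

section
/- Let p be a prime, K a field of characteristic p, and α a nonzero element of K. Then for all nonnegative integers k and l, α^{floor((k+l)/p)} · C(k+l, k) = α^{floor(k/p)+floor(l/p)} · C(k+l, k) in K, where C(k+l,k) is reduced modulo p. -/
/-! The exponents `(k + l) / p` and `k / p + l / p` differ only when adding `k` and `l` in base `p`
carries in the last digit, i.e. `p ≤ k % p + l % p`. In that case Lucas' theorem gives
`C(k + l, k) ≡ C((k + l) % p, k % p) * C((k + l) / p, k / p)`, and the first factor vanishes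
because `(k + l) % p = k % p + l % p - p < k % p`. -/

theorem Nat.Prime.dvd_choose_add_of_le_add_mod {p k l : ℕ} (hp : p.Prime)
    (hcarry : p ≤ k % p + l % p) : p ∣ (k + l).choose k := by
  have : Fact p.Prime := ⟨hp⟩
  have hmod_lt : (k + l) % p < k % p := by
    have := Nat.mod_lt k hp.pos
    have := Nat.mod_lt l hp.pos
    rw [Nat.add_mod, Nat.mod_eq_sub_mod hcarry, Nat.mod_eq_of_lt (by omega)]
    omega
  have hlucas := Choose.choose_modEq_choose_mod_mul_choose_div_nat (n := k + l) (k := k) (p := p)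
  rw [Nat.ModEq, Nat.choose_eq_zero_of_lt hmod_lt, zero_mul] at hlucas
  exact Nat.dvd_of_mod_eq_zero hlucas

theorem CharP.cast_choose_add_eq_zero_of_le_add_mod (R : Type*) [AddMonoidWithOne R] {p : ℕ}
    [CharP R p] (hp : p.Prime) {k l : ℕ} (hcarry : p ≤ k % p + l % p) :
    ((k + l).choose k : R) = 0 :=
  (CharP.cast_eq_zero_iff R p _).mpr (hp.dvd_choose_add_of_le_add_mod hcarry)

theorem stmt1_general (p : ℕ) (hp : p.Prime) (K : Type*) [Field K] [CharP K p]
    (α : K) (k l : ℕ) :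
    α ^ ((k + l) / p) * ((k + l).choose k : K) =
      α ^ (k / p + l / p) * ((k + l).choose k : K) := by
  rcases lt_or_ge (k % p + l % p) p with hno_carry | hcarry
  · rw [Nat.add_div_eq_of_add_mod_lt hno_carry]
  · rw [CharP.cast_choose_add_eq_zero_of_le_add_mod K hp hcarry, mul_zero, mul_zero]

/-- For a field `K` of characteristic `p`, a nonzero `α : K`, and all `k l : ℕ`,
`α^⌊(k+l)/p⌋ · C(k+l,k) = α^(⌊k/p⌋+⌊l/p⌋) · C(k+l,k)` in `K`. -/
theorem stmt1 (p : ℕ) (hp : p.Prime) (K : Type*) [Field K] [CharP K p]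
    (α : K) (hα : α ≠ 0) (k l : ℕ) :
    α ^ ((k + l) / p) * ((k + l).choose k : K) =
      α ^ (k / p + l / p) * ((k + l).choose k : K) :=
  stmt1_general p hp K α k l
end

section
/- In the Lie algebra g = L ⊗ K[x]/(x²) (notation as above) with the Z-grading deg(e_{i,j}) = j, the 2-cochain c = e_{1,0} ⊗ d(e_{0,1}) ∧ d(e_{1,1}) (i.e., c(e_{0,1}, e_{1,1}) = e_{1,0}, c = 0 on all other basis pairs) is a 2-cocycle with values in the adjoint module which is not a coboundary. -/
open Finset

/-- Basis index set: pairs `(i,j)` with `i,j ∈ {0,1}`. -/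
abbrev Idx := Fin 2 × Fin 2

/-- The bracket of `g = L ⊗ K[x]/(x²)`:
`[e_{i,j}, e_{i',j'}] = (i'-i) e_{i+i',j+j'}` for `i+i' ≤ 1`, `j+j' ≤ 1`, else `0`. -/
noncomputable def br (K : Type*) [Field K] (f g : Idx → K) : Idx → K :=
  fun x => ∑ a : Idx, ∑ b : Idx,
    f a * g b *
      (if a.1.1 + b.1.1 ≤ 1 ∧ a.2.1 + b.2.1 ≤ 1 ∧
          x.1.1 = a.1.1 + b.1.1 ∧ x.2.1 = a.2.1 + b.2.1
        then ((b.1.1 : K) - (a.1.1 : K)) else 0)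

/-- The 2-cochain `c = e_{1,0} ⊗ d(e_{0,1}) ∧ d(e_{1,1})`:
`c(e_{0,1}, e_{1,1}) = e_{1,0}` and `c = 0` on all other basis pairs. -/
noncomputable def coc (K : Type*) [Field K] (f g : Idx → K) : Idx → K :=
  fun x =>
    (f ((0 : Fin 2), (1 : Fin 2)) * g ((1 : Fin 2), (1 : Fin 2))
      - f ((1 : Fin 2), (1 : Fin 2)) * g ((0 : Fin 2), (1 : Fin 2))) *
    (if x = ((1 : Fin 2), (0 : Fin 2)) then 1 else 0)

/-!
The cocycle identity is a finite computation on the four-dimensional algebra. For the second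
part, `c` has weight `-2` while the bracket is additive in the nonnegative weights. If `c = dφ`,
evaluate on `u = e_{0,1}`, `v = e_{1,1}`: since `[u, v] = 0`, `c(u, v) = [u, φ v] - [v, φ u]`,
and a bracket with a weight-one element has no weight-zero component, whereas
`c(u, v) = e_{1,0}`.
-/

/-- `f` lies in the weight-one part `span {e_{0,1}, e_{1,1}}`. -/
def IsWeightOne {K : Type*} [Zero K] (f : Idx → K) : Prop :=
  ∀ a : Idx, a.2 = 0 → f a = 0

lemma br_apply_eq_zero {K : Type*} [Field K] {f g : Idx → K} {x : Idx}
    (h : ∀ a b : Idx, x.2.1 = a.2.1 + b.2.1 → f a * g b = 0) : br K f g x = 0 :=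
  sum_eq_zero fun a _ => sum_eq_zero fun b _ => by
    split_ifs with hab
    · rw [h a b hab.2.2.2, zero_mul]
    · exact mul_zero _

lemma br_apply_eq_zero_of_isWeightOne_left {K : Type*} [Field K] {f : Idx → K} (g : Idx → K)
    (hf : IsWeightOne f) {x : Idx} (hx : x.2 = 0) : br K f g x = 0 :=
  br_apply_eq_zero fun a b hab => by
    rw [hf a (by omega), zero_mul]

lemma br_eq_zero_of_isWeightOne {K : Type*} [Field K] {f g : Idx → K}
    (hf : IsWeightOne f) (hg : IsWeightOne g) : br K f g = 0 :=
  funext fun x => br_apply_eq_zero fun a b hab => by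
    rcases Fin.exists_fin_two.mp ⟨a.2, rfl⟩ with ha | ha
    · rw [hf a ha, zero_mul]
    · rw [hg b (by omega), mul_zero]

lemma isWeightOne_single {K : Type*} [Field K] (i : Fin 2) (c : K) :
    IsWeightOne (Pi.single (i, 1) c : Idx → K) := by
  rintro ⟨a, b⟩ (rfl : b = 0)
  simp

lemma coc_isCocycle (K : Type*) [Field K] (x y z : Idx → K) :
    br K x (coc K y z) - br K y (coc K x z) + br K z (coc K x y)
      - coc K (br K x y) z + coc K (br K x z) y - coc K (br K y z) x = 0 := by
  funext ⟨i, j⟩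
  fin_cases i <;> fin_cases j <;>
    simp [br, coc, Fintype.sum_prod_type, Fin.sum_univ_succ, Prod.ext_iff] <;> ring

/-- `c` is a 2-cocycle with values in the adjoint module
(`dc = 0`) and is not the coboundary of any 1-cochain. -/
theorem stmt4 (K : Type*) [Field K] :
    (∀ x y z : Idx → K,
      br K x (coc K y z) - br K y (coc K x z) + br K z (coc K x y)
        - coc K (br K x y) z + coc K (br K x z) y - coc K (br K y z) x = 0) ∧
    ¬ ∃ φ : (Idx → K) →ₗ[K] (Idx → K),
      ∀ x y : Idx → K,
        coc K x y = br K x (φ y) - br K y (φ x) - φ (br K x y) := by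
  refine ⟨coc_isCocycle K, ?_⟩
  rintro ⟨φ, hφ⟩
  let u : Idx → K := Pi.single (0, 1) 1
  let v : Idx → K := Pi.single (1, 1) 1
  have hu : IsWeightOne u := isWeightOne_single 0 1
  have hv : IsWeightOne v := isWeightOne_single 1 1
  have key := congrFun (hφ u v) (1, 0)
  rw [br_eq_zero_of_isWeightOne hu hv, map_zero, Pi.sub_apply, Pi.sub_apply,
    br_apply_eq_zero_of_isWeightOne_left _ hu rfl, br_apply_eq_zero_of_isWeightOne_left _ hv rfl]
    at key
  simp [coc, u, v] at key
end

section
/- Let K be a field of characteristic 2 and g a Lie algebra over K whose underlying space is a commutative associative K-algebra A with bracket [x,y] coming from a biderivation. Let D be a derivation of A which commutes with the bracket-defining derivations and satisfies D² = 0. Then for any ħ ∈ K, the map F_ħ = id + ħD satisfies F_ħ^{-1}([F_ħ(x), F_ħ(y)]) = [x,y] + ħ² [Dx, Dy] for all x, y ∈ A. -/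
/-!
Since `D² = 0`, the maps `F_a = id + aD` form a one-parameter group, `F_a ∘ F_b = F_(a+b)`; in
characteristic 2 this makes every `F_a` an involution. As `D` is a derivation of the bracket,
`[F_a x, F_a y] = F_a [x, y] + a² [Dx, Dy]`, and `F_a` fixes `[Dx, Dy]` because `D` kills it.
-/

/-- The map `F_ħ = id + ħ·D`. -/
def Fmap {K A : Type*} [CommRing K] [CommRing A] [Algebra K A]
    (D : Derivation K A A) (hb : K) (x : A) : A :=
  x + hb • D x

namespace Fmap

variable {K A : Type*} [CommRing K] [CommRing A] [Algebra K A] (D : Derivation K A A)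

theorem map_add (a : K) (x y : A) : Fmap D a (x + y) = Fmap D a x + Fmap D a y := by
  simp only [Fmap, _root_.map_add, smul_add]
  abel

theorem map_smul (a c : K) (x : A) : Fmap D a (c • x) = c • Fmap D a x := by
  rw [Fmap, Fmap, Derivation.map_smul, smul_add, smul_comm a c]

theorem apply_eq_self_of_derivation_eq_zero {a : K} {z : A} (hz : D z = 0) : Fmap D a z = z := by
  rw [Fmap, hz, smul_zero, add_zero]

theorem zero_apply (x : A) : Fmap D 0 x = x := by
  rw [Fmap, zero_smul, add_zero]

theorem comp_apply (a b : K) (x : A) :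
    Fmap D a (Fmap D b x) = Fmap D (a + b) x + (a * b) • D (D x) := by
  simp only [Fmap, _root_.map_add, Derivation.map_smul, smul_add, add_smul, mul_smul]
  abel

variable {D}

theorem comp_apply_of_sq_eq_zero (hD2 : ∀ x : A, D (D x) = 0) (a b : K) (x : A) :
    Fmap D a (Fmap D b x) = Fmap D (a + b) x := by
  rw [comp_apply, hD2, smul_zero, add_zero]

theorem involutive [CharP K 2] (hD2 : ∀ x : A, D (D x) = 0) (a : K) :
    Function.Involutive (Fmap D a) := fun x => by
  rw [comp_apply_of_sq_eq_zero hD2, CharTwo.add_self_eq_zero, zero_apply]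

theorem bracket_apply_apply {br : A →ₗ[K] A →ₗ[K] A}
    (hD : ∀ x y : A, D (br x y) = br (D x) y + br x (D y)) (a : K) (x y : A) :
    br (Fmap D a x) (Fmap D a y) = Fmap D a (br x y) + (a * a) • br (D x) (D y) := by
  simp only [Fmap, _root_.map_add, _root_.map_smul, LinearMap.add_apply, LinearMap.smul_apply,
    hD, smul_add, mul_smul]
  abel

end Fmap

/-- char 2; `g` a Lie algebra whose space is a commutative associative
algebra `A`, with bilinear bracket `br`; `D` a derivation of `A` which is also a
derivation of the bracket and satisfies `D² = 0`.  Then `F_ħ = id + ħD` is its own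
inverse and `F_ħ⁻¹([F_ħ x, F_ħ y]) = [x,y] + ħ²[Dx, Dy]`. -/
theorem stmt6 (K A : Type*) [Field K] [CharP K 2] [CommRing A] [Algebra K A]
    (br : A →ₗ[K] A →ₗ[K] A) (D : Derivation K A A)
    (hD : ∀ x y : A, D (br x y) = br (D x) y + br x (D y))
    (hD2 : ∀ x : A, D (D x) = 0) (hb : K) :
    (∀ x : A, Fmap D hb (Fmap D hb x) = x) ∧
    (∀ x y : A,
      Fmap D hb (br (Fmap D hb x) (Fmap D hb y))
        = br x y + (hb * hb) • br (D x) (D y)) := by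
  have hinv := Fmap.involutive hD2 hb
  refine ⟨hinv, fun x y => ?_⟩
  have hkill : D (br (D x) (D y)) = 0 := by
    rw [hD, hD2, hD2, map_zero, LinearMap.zero_apply, map_zero, add_zero]
  rw [Fmap.bracket_apply_apply hD, Fmap.map_add, hinv, Fmap.map_smul,
    Fmap.apply_eq_self_of_derivation_eq_zero D hkill]
end

section
/- Over the field F₂, let V be a finite-dimensional vector space with a symmetric bilinear form B, and let Γ ⊆ V \ {0} be a J-system: whenever u, v ∈ Γ are distinct and B(u,v) = 1, then u+v ∈ Γ. Then the algebra g_Γ with basis {e_u : u ∈ Γ} and multiplication [e_u, e_v] = B(u,v) e_{u+v} if u ≠ v and u+v ∈ Γ, and [e_u, e_v] = 0 otherwise, is a Lie algebra, provided B is alternate (B(w,w)=0 for all w). -/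
/-!
For `a, b, c ∈ Γ` the J-property gives `[[e_a, e_b], e_c] = B(a,b) B(a+b,c) e_{a+b+c}` when
`a + b + c ≠ 0`, and `0` otherwise: a nonzero coefficient forces `B(a,b) = 1`, which puts `a + b`
in `Γ`, and `B(a+b,c) = 1`, which puts `a + b + c` in `Γ`. By bilinearity and symmetry the cyclic
sum of these coefficients is `2 (B(a,b)B(a,c) + B(a,b)B(b,c) + B(a,c)B(b,c)) = 0`, which is the
Jacobi identity. The identity `[x, x] = 0` holds because the structure constants are symmetric
with zero diagonal, so in characteristic `2` the off-diagonal terms cancel in pairs.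
-/

open Finset

/-- The Kaplansky bracket on the span of `{e_u : u ∈ Γ}`:
`[e_u, e_v] = B(u,v) e_{u+v}` if `u ≠ v` and `u+v ∈ Γ`, and `0` otherwise. -/
def kbr {n : ℕ} (B : (Fin n → ZMod 2) → (Fin n → ZMod 2) → ZMod 2)
    (Γ : Finset (Fin n → ZMod 2))
    (f g : {u // u ∈ Γ} → ZMod 2) : {u // u ∈ Γ} → ZMod 2 :=
  fun w => ∑ u : {u // u ∈ Γ}, ∑ v : {u // u ∈ Γ},
    f u * g v *
      (if (u : Fin n → ZMod 2) ≠ (v : Fin n → ZMod 2) ∧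
          (u : Fin n → ZMod 2) + (v : Fin n → ZMod 2) ∈ Γ ∧
          (w : Fin n → ZMod 2) = (u : Fin n → ZMod 2) + (v : Fin n → ZMod 2)
        then B u v else 0)

theorem CharTwo.sum_sum_eq_zero_of_symm {ι R : Type*} [Fintype ι] [Ring R] [CharP R 2]
    (M : ι → ι → R) (hM : ∀ i j, M i j = M j i) (hdiag : ∀ i, M i i = 0) :
    ∑ i, ∑ j, M i j = 0 := by
  rw [← Fintype.sum_prod_type']
  refine sum_ninvolution Prod.swap (fun p => ?_) (fun ⟨i, j⟩ hij hswap => hij ?_)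
    (fun p => mem_univ _) Prod.swap_swap
  · rw [Prod.fst_swap, Prod.snd_swap, hM, CharTwo.add_self_eq_zero]
  · obtain rfl : j = i := congrArg Prod.fst hswap
    exact hdiag j

section Coefficient

variable {V : Type*} [AddCommGroup V] [DecidableEq V]

def kaplanskyCoeff (B : V → V → ZMod 2) (Γ : Finset V) (a b w : V) : ZMod 2 :=
  if a ≠ b ∧ a + b ∈ Γ ∧ w = a + b then B a b else 0

variable (B : V → V → ZMod 2) (Γ : Finset V)

theorem kaplanskyCoeff_comm (hB : ∀ u v, B u v = B v u) (a b w : V) :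
    kaplanskyCoeff B Γ a b w = kaplanskyCoeff B Γ b a w := by
  simp only [kaplanskyCoeff, ne_comm, add_comm a b, hB a b]

theorem kaplanskyCoeff_self (a w : V) : kaplanskyCoeff B Γ a a w = 0 := by
  simp [kaplanskyCoeff]

theorem sum_kaplanskyCoeff_mul (a b c w : V) :
    ∑ x : Γ, kaplanskyCoeff B Γ a b x * kaplanskyCoeff B Γ x c w
      = kaplanskyCoeff B Γ a b (a + b) * kaplanskyCoeff B Γ (a + b) c w := by
  by_cases hab : a + b ∈ Γ
  · rw [Fintype.sum_eq_single ⟨a + b, hab⟩ fun x hx => ?_]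
    have hx' : (x : V) ≠ a + b := fun h => hx (Subtype.ext h)
    simp [kaplanskyCoeff, hx']
  · simp [kaplanskyCoeff, hab]

end Coefficient

section BilinForm

variable {V : Type*} [AddCommGroup V] [Module (ZMod 2) V] [DecidableEq V]
  (B : LinearMap.BilinForm (ZMod 2) V) (Γ : Finset V)

theorem kaplanskyCoeff_mul_kaplanskyCoeff
    (hJ : ∀ u v, u ∈ Γ → v ∈ Γ → u ≠ v → B u v = 1 → u + v ∈ Γ)
    {a b c : V} (ha : a ∈ Γ) (hb : b ∈ Γ) (hc : c ∈ Γ) (w : V) :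
    kaplanskyCoeff (fun u v => B u v) Γ a b (a + b)
        * kaplanskyCoeff (fun u v => B u v) Γ (a + b) c w
      = if w = a + b + c ∧ a + b + c ≠ 0 then B a b * B (a + b) c else 0 := by
  have zero_or_one : ∀ x : ZMod 2, x = 0 ∨ x = 1 := by decide
  by_cases hab : a = b
  · subst hab
    simp [kaplanskyCoeff_self, ZModModule.add_self]
  obtain hab₀ | hab₁ := zero_or_one (B a b)
  · simp [kaplanskyCoeff, hab₀]
  have hab_mem := hJ a b ha hb hab hab₁
  by_cases habc : a + b = c
  · simp [habc, kaplanskyCoeff_self, ZModModule.add_self]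
  have habc₀ : a + b + c ≠ 0 := by
    rwa [Ne, add_eq_zero_iff_eq_neg, ZModModule.neg_eq_self]
  obtain habc₀' | habc₁ := zero_or_one (B (a + b) c)
  · simp only [kaplanskyCoeff, habc₀', ite_self, mul_zero]
  have habc_mem := hJ _ _ hab_mem hc habc habc₁
  simp [kaplanskyCoeff, hab, hab_mem, habc, habc_mem, habc₀, hab₁]

theorem kaplanskyCoeff_jacobi (hB : ∀ u v, B u v = B v u)
    (hJ : ∀ u v, u ∈ Γ → v ∈ Γ → u ≠ v → B u v = 1 → u + v ∈ Γ)
    {a b c : V} (ha : a ∈ Γ) (hb : b ∈ Γ) (hc : c ∈ Γ) (w : V) :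
    kaplanskyCoeff (fun u v => B u v) Γ a b (a + b)
          * kaplanskyCoeff (fun u v => B u v) Γ (a + b) c w
        + kaplanskyCoeff (fun u v => B u v) Γ b c (b + c)
          * kaplanskyCoeff (fun u v => B u v) Γ (b + c) a w
        + kaplanskyCoeff (fun u v => B u v) Γ c a (c + a)
          * kaplanskyCoeff (fun u v => B u v) Γ (c + a) b w = 0 := by
  rw [kaplanskyCoeff_mul_kaplanskyCoeff B Γ hJ ha hb hc,
    kaplanskyCoeff_mul_kaplanskyCoeff B Γ hJ hb hc ha,
    kaplanskyCoeff_mul_kaplanskyCoeff B Γ hJ hc ha hb,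
    show b + c + a = a + b + c by abel, show c + a + b = a + b + c by abel]
  split_ifs
  · simp only [map_add, LinearMap.add_apply, hB b a, hB c a, hB c b]
    linear_combination (B a b * B a c + B a b * B b c + B a c * B b c)
      * (CharTwo.two_eq_zero : (2 : ZMod 2) = 0)
  · simp

end BilinForm

section KaplanskyBracket

variable {n : ℕ} (B : (Fin n → ZMod 2) → (Fin n → ZMod 2) → ZMod 2)
  (Γ : Finset (Fin n → ZMod 2))

theorem kbr_apply (f g : Γ → ZMod 2) (w : Γ) :
    kbr B Γ f g w = ∑ u : Γ, ∑ v : Γ, f u * g v * kaplanskyCoeff B Γ u v w :=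
  rfl

theorem kbr_self (hB : ∀ u v, B u v = B v u) (f : Γ → ZMod 2) : kbr B Γ f f = 0 := by
  funext w
  rw [kbr_apply, Pi.zero_apply]
  refine CharTwo.sum_sum_eq_zero_of_symm _ (fun u v => ?_) (fun u => ?_)
  · rw [mul_comm (f u), kaplanskyCoeff_comm B Γ hB]
  · rw [kaplanskyCoeff_self, mul_zero]

theorem kbr_kbr_apply (f g h : Γ → ZMod 2) (w : Γ) :
    kbr B Γ (kbr B Γ f g) h w = ∑ a : Γ, ∑ b : Γ, ∑ c : Γ, f a * g b * h c *
      (kaplanskyCoeff B Γ a b (a + b) * kaplanskyCoeff B Γ (a + b) c w) := by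
  simp only [kbr_apply, ← sum_kaplanskyCoeff_mul, sum_mul, mul_sum]
  conv_lhs => rw [sum_comm]
  conv_rhs => rw [sum_comm_cycle]
  refine sum_congr rfl fun c _ => ?_
  conv_rhs => rw [sum_comm_cycle]
  refine sum_congr rfl fun x _ => sum_congr rfl fun a _ => sum_congr rfl fun b _ => ?_
  ring

end KaplanskyBracket

theorem stmt7_general {n : ℕ} (B : LinearMap.BilinForm (ZMod 2) (Fin n → ZMod 2))
    (hsym : ∀ u v, B u v = B v u)
    (Γ : Finset (Fin n → ZMod 2))
    (hJ : ∀ u v, u ∈ Γ → v ∈ Γ → u ≠ v → B u v = 1 → u + v ∈ Γ) :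
    (∀ f : {u // u ∈ Γ} → ZMod 2, kbr (fun u v => B u v) Γ f f = 0) ∧
    (∀ f g h : {u // u ∈ Γ} → ZMod 2,
      kbr (fun u v => B u v) Γ (kbr (fun u v => B u v) Γ f g) h
        + kbr (fun u v => B u v) Γ (kbr (fun u v => B u v) Γ g h) f
        + kbr (fun u v => B u v) Γ (kbr (fun u v => B u v) Γ h f) g = 0) := by
  refine ⟨kbr_self _ Γ hsym, fun f g h => funext fun w => ?_⟩
  simp only [Pi.add_apply, Pi.zero_apply, kbr_kbr_apply]
  conv_lhs =>
    enter [1, 2]; rw [sum_comm_cycle]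
  conv_lhs =>
    enter [2]; rw [sum_comm_cycle, sum_comm_cycle]
  simp only [← sum_add_distrib]
  refine sum_eq_zero fun a _ => sum_eq_zero fun b _ => sum_eq_zero fun c _ => ?_
  linear_combination (f a * g b * h c) * kaplanskyCoeff_jacobi B Γ hsym hJ a.2 b.2 c.2 w

/-- for an alternate symmetric bilinear form `B` on a finite-dimensional
`F₂`-space and a J-system `Γ` (a set of nonzero vectors such that `u+v ∈ Γ` whenever
`u, v ∈ Γ` are distinct with `B(u,v) = 1`), the algebra `g_Γ` is a Lie algebra. -/
theorem stmt7 {n : ℕ} (B : LinearMap.BilinForm (ZMod 2) (Fin n → ZMod 2))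
    (hsym : ∀ u v, B u v = B v u) (halt : ∀ w, B w w = 0)
    (Γ : Finset (Fin n → ZMod 2)) (h0 : (0 : Fin n → ZMod 2) ∉ Γ)
    (hJ : ∀ u v, u ∈ Γ → v ∈ Γ → u ≠ v → B u v = 1 → u + v ∈ Γ) :
    (∀ f : {u // u ∈ Γ} → ZMod 2, kbr (fun u v => B u v) Γ f f = 0) ∧
    (∀ f g h : {u // u ∈ Γ} → ZMod 2,
      kbr (fun u v => B u v) Γ (kbr (fun u v => B u v) Γ f g) h
        + kbr (fun u v => B u v) Γ (kbr (fun u v => B u v) Γ g h) f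
        + kbr (fun u v => B u v) Γ (kbr (fun u v => B u v) Γ h f) g = 0) :=
  stmt7_general B hsym Γ hJ
end

section
/- Let V be a finite-dimensional F₂-vector space with a non-degenerate alternate symmetric bilinear form B, Γ a J-system in V, and g_Γ the associated Kaplansky Lie algebra with basis {e_u : u ∈ Γ}. Then the symmetric bilinear form K on g_Γ defined by K(e_u, e_v) = δ_{u,v} is invariant: K([e_u, e_z], e_v) = K(e_u, [e_z, e_v]) for all u, z, v ∈ Γ. -/
/-- The basis vector `e_u`. -/
def ebase {n : ℕ} (Γ : Finset (Fin n → ZMod 2)) (u : {u // u ∈ Γ}) :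
    {u // u ∈ Γ} → ZMod 2 :=
  fun w => if w = u then 1 else 0

/-- The form `K(e_u, e_v) = δ_{u,v}`, extended bilinearly. -/
def Kform {n : ℕ} (Γ : Finset (Fin n → ZMod 2))
    (f g : {u // u ∈ Γ} → ZMod 2) : ZMod 2 :=
  ∑ w : {u // u ∈ Γ}, f w * g w

theorem Pi.zmod_two_add_self {ι : Type*} (x : ι → ZMod 2) : x + x = 0 :=
  funext fun _ => CharTwo.add_self_eq_zero _

theorem Pi.zmod_two_eq_add_iff {ι : Type*} {x y z : ι → ZMod 2} : x = y + z ↔ y = z + x := by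
  constructor <;> rintro rfl
  · rw [add_left_comm, Pi.zmod_two_add_self, add_zero]
  · rw [add_right_comm, Pi.zmod_two_add_self, zero_add]

section Kaplansky

variable {n : ℕ} {Γ : Finset (Fin n → ZMod 2)}

theorem Kform_ebase_right (f : {u // u ∈ Γ} → ZMod 2) (a : {u // u ∈ Γ}) :
    Kform Γ f (ebase Γ a) = f a := by
  simp [Kform, ebase]

theorem Kform_ebase_left (f : {u // u ∈ Γ} → ZMod 2) (a : {u // u ∈ Γ}) :
    Kform Γ (ebase Γ a) f = f a := by
  simp [Kform, ebase]

theorem kbr_ebase_ebase {B : (Fin n → ZMod 2) → (Fin n → ZMod 2) → ZMod 2}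
    (hB : ∀ x, B x x = 0) (a b w : {u // u ∈ Γ}) :
    kbr B Γ (ebase Γ a) (ebase Γ b) w = if (w : Fin n → ZMod 2) = a + b then B a b else 0 := by
  rw [kbr, Fintype.sum_eq_single a (by simp +contextual [ebase]),
    Fintype.sum_eq_single b (by simp +contextual [ebase])]
  simp only [ebase, if_true, one_mul]
  by_cases hab : (a : Fin n → ZMod 2) = b
  · simp [hab, hB]
  · by_cases hw : (w : Fin n → ZMod 2) = a + b
    · rw [if_pos ⟨hab, hw ▸ w.2, hw⟩, if_pos hw]
    · simp [hw]

end Kaplansky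

theorem stmt8_general {n : ℕ} (B : LinearMap.BilinForm (ZMod 2) (Fin n → ZMod 2))
    (halt : ∀ w, B w w = 0)
    (Γ : Finset (Fin n → ZMod 2))
    (u z v : {u // u ∈ Γ}) :
    Kform Γ (kbr (fun a b => B a b) Γ (ebase Γ u) (ebase Γ z)) (ebase Γ v)
      = Kform Γ (ebase Γ u) (kbr (fun a b => B a b) Γ (ebase Γ z) (ebase Γ v)) := by
  rw [Kform_ebase_right, Kform_ebase_left, kbr_ebase_ebase halt, kbr_ebase_ebase halt]
  by_cases h : (v : Fin n → ZMod 2) = u + z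
  · rw [if_pos h, if_pos (Pi.zmod_two_eq_add_iff.1 h)]
    exact LinearMap.IsAlt.eq_of_add_add_eq_zero halt (by rw [h, Pi.zmod_two_add_self])
  · rw [if_neg h, if_neg (mt Pi.zmod_two_eq_add_iff.2 h)]

/-- the form `K(e_u,e_v) = δ_{u,v}` on the Kaplansky algebra of a
J-system `Γ` for a non-degenerate alternate symmetric bilinear form `B` is invariant:
`K([e_u,e_z],e_v) = K(e_u,[e_z,e_v])`. -/
theorem stmt8 {n : ℕ} (B : LinearMap.BilinForm (ZMod 2) (Fin n → ZMod 2))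
    (hsym : ∀ u v, B u v = B v u) (halt : ∀ w, B w w = 0)
    (hnd : ∀ u, (∀ v, B u v = 0) → u = 0)
    (Γ : Finset (Fin n → ZMod 2)) (h0 : (0 : Fin n → ZMod 2) ∉ Γ)
    (hJ : ∀ u v, u ∈ Γ → v ∈ Γ → u ≠ v → B u v = 1 → u + v ∈ Γ)
    (u z v : {u // u ∈ Γ}) :
    Kform Γ (kbr (fun a b => B a b) Γ (ebase Γ u) (ebase Γ z)) (ebase Γ v)
      = Kform Γ (ebase Γ u) (kbr (fun a b => B a b) Γ (ebase Γ z) (ebase Γ v)) :=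
  stmt8_general B halt Γ u z v
end

section
/- Let K be a field of characteristic 2, m ≥ 1, and let O be the truncated polynomial algebra K[p₁,…,p_m,q₁,…,q_m]/(p_i², q_i²). Then the bracket [f,g] = Σ_{i=1}^m (1+p_i)(1+q_i)(∂_{p_i}f · ∂_{q_i}g + ∂_{q_i}f · ∂_{p_i}g) defines a Lie algebra structure on O. -/
open Finset

/-- Exponent multi-indices for the truncated polynomial algebra
`K[p₁,…,p_m,q₁,…,q_m]/(pᵢ²,qᵢ²)`: a monomial is a pair of subsets of `{1,…,m}`. -/
abbrev Expo (m : ℕ) := (Fin m → Bool) × (Fin m → Bool)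

/-- The truncated polynomial algebra, as the space of coefficient functions. -/
abbrev TO (K : Type*) (m : ℕ) := Expo m → K

variable {K : Type*} [Field K] {m : ℕ}

/-- Multiplication of truncated polynomials: monomials multiply iff their supports
are disjoint, and then supports unite. -/
def mulO (f g : TO K m) : TO K m := fun e =>
  ∑ a : Expo m, ∑ b : Expo m,
    if (∀ i, ¬(a.1 i = true ∧ b.1 i = true) ∧ ((a.1 i = true ∨ b.1 i = true) ↔ e.1 i = true)
          ∧ ¬(a.2 i = true ∧ b.2 i = true) ∧ ((a.2 i = true ∨ b.2 i = true) ↔ e.2 i = true))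
      then f a * g b else 0

/-- The partial derivative `∂_{p_i}`. -/
def dp (i : Fin m) (f : TO K m) : TO K m := fun e =>
  if e.1 i = false then f (Function.update e.1 i true, e.2) else 0

/-- The partial derivative `∂_{q_i}`. -/
def dq (i : Fin m) (f : TO K m) : TO K m := fun e =>
  if e.2 i = false then f (e.1, Function.update e.2 i true) else 0

/-- Multiplication by `1 + p_i`. -/
def mp (i : Fin m) (f : TO K m) : TO K m := fun e =>
  f e + if e.1 i = true then f (Function.update e.1 i false, e.2) else 0

/-- Multiplication by `1 + q_i`. -/
def mq (i : Fin m) (f : TO K m) : TO K m := fun e =>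
  f e + if e.2 i = true then f (e.1, Function.update e.2 i false) else 0

/-- The bracket `[f,g] = Σᵢ (1+pᵢ)(1+qᵢ)(∂_{pᵢ}f·∂_{qᵢ}g + ∂_{qᵢ}f·∂_{pᵢ}g)`. -/
def br13 (f g : TO K m) : TO K m :=
  ∑ i : Fin m, mp i (mq i (mulO (dp i f) (dq i g) + mulO (dq i f) (dp i g)))

/-!
Identify `O` with the ring of coefficient functions on the Boolean algebra of exponents under
subset convolution. In characteristic `2` the partial derivative along an atom is a derivation, so
`Dᵢ = (1 + pᵢ) ∂_{pᵢ}` and `Eᵢ = (1 + qᵢ) ∂_{qᵢ}` are pairwise commuting derivations of `O`, and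
the bracket is `Σᵢ (Dᵢ f · Eᵢ g - Eᵢ f · Dᵢ g)`. For commuting derivations this bracket is
alternating, and `{{f, g}, h} = S(f; g, h) - S(g; f, h)`, where `S(f; g, h)` collects the terms
differentiating `f` twice; `S(f; g, h)` is symmetric in `g, h` because the derivations commute,
so the cyclic sum cancels.
-/

section PoissonBracket

variable {R A ι : Type*} [CommRing R] [CommRing A] [Algebra R A] [Fintype ι]

def poissonBracket (D E : ι → Derivation R A A) (f g : A) : A :=
  ∑ i, (D i f * E i g - E i f * D i g)

theorem poissonBracket_self (D E : ι → Derivation R A A) (f : A) :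
    poissonBracket D E f f = 0 :=
  sum_eq_zero fun i _ => by rw [mul_comm, sub_self]

/-- The terms of `{{f, g}, h}` in which `f` is differentiated twice. -/
def secondOrderPart (D E : ι → Derivation R A A) (f g h : A) : A :=
  ∑ j, ∑ i, (D j (D i f) * E i g * E j h - D j (E i f) * D i g * E j h
    - E j (D i f) * E i g * D j h + E j (E i f) * D i g * D j h)

theorem poissonBracket_poissonBracket (D E : ι → Derivation R A A) (f g h : A) :
    poissonBracket D E (poissonBracket D E f g) h
      = secondOrderPart D E f g h - secondOrderPart D E g f h := by
  simp only [poissonBracket, secondOrderPart, map_sum, map_sub, Derivation.leibniz, smul_eq_mul,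
    sum_mul, ← sum_sub_distrib]
  exact sum_congr rfl fun j _ => sum_congr rfl fun i _ => by ring

theorem secondOrderPart_comm (D E : ι → Derivation R A A)
    (hDD : ∀ i j a, D i (D j a) = D j (D i a)) (hDE : ∀ i j a, D i (E j a) = E j (D i a))
    (hEE : ∀ i j a, E i (E j a) = E j (E i a)) (f g h : A) :
    secondOrderPart D E f g h = secondOrderPart D E f h g := by
  rw [secondOrderPart, secondOrderPart, sum_comm]
  refine sum_congr rfl fun i _ => sum_congr rfl fun j _ => ?_
  rw [hDD i j, hDE i j, ← hDE j i, hEE i j]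
  ring

theorem poissonBracket_jacobi (D E : ι → Derivation R A A)
    (hDD : ∀ i j a, D i (D j a) = D j (D i a)) (hDE : ∀ i j a, D i (E j a) = E j (D i a))
    (hEE : ∀ i j a, E i (E j a) = E j (E i a)) (f g h : A) :
    poissonBracket D E (poissonBracket D E f g) h + poissonBracket D E (poissonBracket D E g h) f
      + poissonBracket D E (poissonBracket D E h f) g = 0 := by
  simp only [poissonBracket_poissonBracket]
  rw [secondOrderPart_comm D E hDD hDE hEE g h f, secondOrderPart_comm D E hDD hDE hEE h f g,
    secondOrderPart_comm D E hDD hDE hEE f h g]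
  abel

theorem Derivation.smul_apply_smul_apply_comm {D D' : Derivation R A A}
    (hDD' : ∀ a, D (D' a) = D' (D a)) {u v : A} (hu : D' u = 0) (hv : D v = 0) (a : A) :
    (u • D) ((v • D') a) = (v • D') ((u • D) a) := by
  simp only [Derivation.smul_apply, smul_eq_mul, Derivation.leibniz, hu, hv, hDD']
  ring

end PoissonBracket

theorem disjoint_and_sup_eq_iff {α : Type*} [BooleanAlgebra α] {a b e : α} :
    Disjoint a b ∧ a ⊔ b = e ↔ a ≤ e ∧ b = e \ a := by
  constructor
  · rintro ⟨hab, rfl⟩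
    exact ⟨le_sup_left, hab.sup_sdiff_cancel_left.symm⟩
  · rintro ⟨hae, rfl⟩
    exact ⟨disjoint_sdiff_self_right, sup_sdiff_cancel_right hae⟩

theorem IsAtom.not_le_sdiff_self {α : Type*} [BooleanAlgebra α] {x : α} (hx : IsAtom x)
    (a : α) : ¬ x ≤ a \ x :=
  fun h => hx.1 (disjoint_self.1 (le_sdiff.1 h).2)

open scoped symmDiff in
theorem sum_comp_symmDiff {α M : Type*} [BooleanAlgebra α] [Fintype α] [AddCommMonoid M] (x : α)
    (F : α → M) : ∑ a, F (a ∆ x) = ∑ a, F a :=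
  Equiv.sum_comp (Function.Involutive.toPerm _ fun a => symmDiff_symmDiff_cancel_right x a) F

open Classical in
theorem sum_ite_sum_sum_ite_sup_eq {α M : Type*} [BooleanAlgebra α] [Fintype α] [AddCommMonoid M]
    (Q : α → Prop) [DecidablePred Q] (F : α → α → M) :
    ∑ x, (if Q x then ∑ a, ∑ b, (if Disjoint a b ∧ a ⊔ b = x then F a b else 0) else 0)
      = ∑ a, ∑ b, if Disjoint a b ∧ Q (a ⊔ b) then F a b else 0 := by
  calc _ = ∑ x, ∑ a, ∑ b,
          if a ⊔ b = x then (if Disjoint a b ∧ Q (a ⊔ b) then F a b else 0) else 0 := by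
        refine sum_congr rfl fun x _ => ?_
        split_ifs with hQ
        · refine sum_congr rfl fun a _ => sum_congr rfl fun b _ => ?_
          by_cases h : a ⊔ b = x <;> simp [h, hQ]
        · refine (sum_eq_zero fun a _ => sum_eq_zero fun b _ => ?_).symm
          by_cases h : a ⊔ b = x <;> simp_all
    _ = _ := by
      rw [sum_comm]
      refine sum_congr rfl fun a _ => ?_
      rw [sum_comm]
      simp

/-- Coefficient functions on a finite Boolean algebra `α`, multiplied by subset convolution: the
monomials `e` and `e'` multiply to `e ⊔ e'` if they are disjoint and to `0` otherwise. For
`α = Expo m` this is `K[p₁,…,p_m,q₁,…,q_m]/(pᵢ², qᵢ²)`. -/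
def TruncPoly (α R : Type*) : Type _ := α → R

namespace TruncPoly

open Classical

noncomputable section

variable {α R : Type*} [CommRing R]

instance : AddCommGroup (TruncPoly α R) := inferInstanceAs (AddCommGroup (α → R))

def of : (α → R) ≃+ TruncPoly α R := AddEquiv.refl _

def coeff (p : TruncPoly α R) : α → R := of.symm p

@[simp] theorem coeff_of (f : α → R) : (of f).coeff = f := rfl

@[ext] theorem ext {p q : TruncPoly α R} (h : ∀ e, p.coeff e = q.coeff e) : p = q := funext h

@[simp] theorem coeff_add (p q : TruncPoly α R) (e : α) :
    (p + q).coeff e = p.coeff e + q.coeff e := rfl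

@[simp] theorem coeff_zero (e : α) : (0 : TruncPoly α R).coeff e = 0 := rfl

def monomial (x : α) : TruncPoly α R := of (Pi.single x 1)

@[simp] theorem coeff_monomial (x e : α) :
    (monomial x : TruncPoly α R).coeff e = if e = x then 1 else 0 :=
  Pi.single_apply x 1 e

theorem sub_eq_add [CharP R 2] (p q : TruncPoly α R) : p - q = p + q :=
  funext fun e => CharTwo.sub_eq_add (p.coeff e) (q.coeff e)

variable [BooleanAlgebra α]

def pderiv (x : α) : TruncPoly α R →+ TruncPoly α R where
  toFun p := of fun e => if x ≤ e then 0 else p.coeff (e ⊔ x)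
  map_zero' := by ext e; simp
  map_add' p q := by ext e; simp only [coeff_of, coeff_add]; split_ifs <;> simp

theorem coeff_pderiv (x : α) (p : TruncPoly α R) (e : α) :
    (pderiv x p).coeff e = if x ≤ e then 0 else p.coeff (e ⊔ x) := rfl

theorem pderiv_pderiv_comm {x y : α} (hx : IsAtom x) (hy : IsAtom y) (p : TruncPoly α R) :
    pderiv x (pderiv y p) = pderiv y (pderiv x p) := by
  obtain rfl | hxy := eq_or_ne x y
  · rfl
  ext e
  have le_sup_iff {a b : α} (ha : IsAtom a) (hb : IsAtom b) (hab : a ≠ b) :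
      a ≤ e ⊔ b ↔ a ≤ e :=
    ⟨(ha.disjoint_of_ne hb hab).left_le_of_le_sup_right, le_sup_of_le_left⟩
  simp only [coeff_pderiv, le_sup_iff hx hy hxy, le_sup_iff hy hx hxy.symm, sup_right_comm e x]
  split_ifs <;> rfl

theorem pderiv_monomial_of_not_le {x y : α} (h : ¬ x ≤ y) :
    pderiv x (monomial y : TruncPoly α R) = 0 := by
  ext e
  rw [coeff_pderiv, coeff_monomial]
  split_ifs with h₁ h₂
  · rfl
  · exact absurd (h₂ ▸ le_sup_right) h
  · rfl

variable [Fintype α]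

instance : Mul (TruncPoly α R) :=
  ⟨fun p q => of fun e =>
    ∑ a, ∑ b, if Disjoint a b ∧ a ⊔ b = e then p.coeff a * q.coeff b else 0⟩

theorem coeff_mul (p q : TruncPoly α R) (e : α) :
    (p * q).coeff e =
      ∑ a, ∑ b, if Disjoint a b ∧ a ⊔ b = e then p.coeff a * q.coeff b else 0 := rfl

theorem coeff_monomial_mul (x : α) (p : TruncPoly α R) (e : α) :
    (monomial x * p).coeff e = if x ≤ e then p.coeff (e \ x) else 0 := by
  rw [coeff_mul, sum_eq_single x (fun a _ ha => by simp [ha]) (by simp)]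
  simp [disjoint_and_sup_eq_iff, ite_and]

protected theorem mul_comm (p q : TruncPoly α R) : p * q = q * p := by
  ext e
  rw [coeff_mul, coeff_mul, sum_comm]
  refine sum_congr rfl fun b _ => sum_congr rfl fun a _ => ?_
  rw [disjoint_comm, sup_comm, mul_comm]

theorem coeff_mul_mul (p q r : TruncPoly α R) (e : α) :
    (p * q * r).coeff e = ∑ a, ∑ b, ∑ c,
      if Disjoint a b ∧ Disjoint (a ⊔ b) c ∧ a ⊔ b ⊔ c = e then
        p.coeff a * q.coeff b * r.coeff c
      else 0 := by
  simp only [coeff_mul, sum_mul, ite_mul, zero_mul]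
  rw [sum_comm]
  simp only [sum_ite_sum_sum_ite_sup_eq]
  rw [sum_comm]
  refine sum_congr rfl fun a _ => sum_comm

protected theorem mul_assoc (p q r : TruncPoly α R) : p * q * r = p * (q * r) := by
  -- Both sides sum over the pairwise disjoint triples with supremum `e`.
  ext e
  rw [TruncPoly.mul_comm p (q * r), coeff_mul_mul, coeff_mul_mul]
  conv_rhs => enter [2, b]; rw [sum_comm]
  rw [sum_comm (f := fun b a => ∑ c, _)]
  refine sum_congr rfl fun a _ => sum_congr rfl fun b _ => sum_congr rfl fun c _ => ?_
  refine if_congr ?_ (by ring) rfl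
  simp only [disjoint_sup_left]
  constructor <;> rintro ⟨h₁, ⟨h₂, h₃⟩, rfl⟩ <;>
    refine ⟨?_, ⟨?_, ?_⟩, by ac_rfl⟩ <;> first | assumption | exact disjoint_comm.mp ‹_›

instance : One (TruncPoly α R) := ⟨monomial ⊥⟩

protected theorem one_mul (p : TruncPoly α R) : 1 * p = p := by
  ext e
  simp [show (1 : TruncPoly α R) = monomial ⊥ from rfl, coeff_monomial_mul]

protected theorem add_mul (p q r : TruncPoly α R) : (p + q) * r = p * r + q * r := by
  ext e
  simp only [coeff_mul, coeff_add, add_mul, ← sum_add_distrib, ite_add_ite, add_zero]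

protected theorem zero_mul (p : TruncPoly α R) : 0 * p = 0 := by
  ext e
  simp [coeff_mul]

instance : CommRing (TruncPoly α R) where
  mul_assoc := TruncPoly.mul_assoc
  one_mul := TruncPoly.one_mul
  mul_one p := (TruncPoly.mul_comm p 1).trans (TruncPoly.one_mul p)
  left_distrib p q r := by simp only [TruncPoly.mul_comm p, TruncPoly.add_mul]
  right_distrib := TruncPoly.add_mul
  zero_mul := TruncPoly.zero_mul
  mul_zero p := (TruncPoly.mul_comm p 0).trans (TruncPoly.zero_mul p)
  mul_comm := TruncPoly.mul_comm

theorem coeff_mul_eq_sum_le (p q : TruncPoly α R) (e : α) :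
    (p * q).coeff e = ∑ a, if a ≤ e then p.coeff a * q.coeff (e \ a) else 0 := by
  rw [coeff_mul]
  refine sum_congr rfl fun a _ => ?_
  simp [disjoint_and_sup_eq_iff, ite_and]

open scoped symmDiff in
/-- Characteristic `2` is needed: `x * x = 0`, while the Leibniz rule would give `2 x`. -/
theorem pderiv_mul [CharP R 2] {x : α} (hx : IsAtom x) (p q : TruncPoly α R) :
    pderiv x (p * q) = pderiv x p * q + p * pderiv x q := by
  ext e
  -- After reindexing the `∂ₓ p * q` sum by `a ↦ a ∆ x`, the sums agree term by term; when
  -- `x ≤ e` the two terms on the right coincide and cancel.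
  rw [coeff_add, coeff_mul_eq_sum_le, coeff_mul_eq_sum_le, ← sum_comp_symmDiff x,
    ← sum_add_distrib]
  simp only [coeff_pderiv]
  by_cases he : x ≤ e
  · rw [if_pos he]
    refine (sum_eq_zero fun a _ => ?_).symm
    by_cases hxa : x ≤ a
    · have hxea : ¬ x ≤ e \ a := fun h => hx.not_le_iff_disjoint.2 (le_sdiff.1 h).2 hxa
      rw [symmDiff_of_ge hxa, if_neg (hx.not_le_sdiff_self a), sdiff_sup_cancel hxa,
        sdiff_sdiff_right', inf_of_le_right he, sdiff_le_iff, sup_of_le_right he, if_neg hxea]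
      exact CharTwo.add_self_eq_zero _
    · have hxa' := hx.not_le_iff_disjoint.1 hxa
      rw [hxa'.symm.symmDiff_eq_sup, if_pos le_sup_right, if_pos (le_sdiff.2 ⟨he, hxa'⟩)]
      simp
  · have hxe := hx.not_le_iff_disjoint.1 he
    rw [if_neg he, coeff_mul_eq_sum_le]
    refine sum_congr rfl fun a _ => ?_
    by_cases hxa : x ≤ a
    · have hae : ¬ a ≤ e := fun h => he (hxa.trans h)
      rw [symmDiff_of_ge hxa, if_neg (hx.not_le_sdiff_self a), sdiff_sup_cancel hxa,
        sdiff_sdiff_right', disjoint_iff.1 hxe.symm, sup_bot_eq, sdiff_le_iff, sup_comm x,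
        sup_sdiff, sdiff_eq_bot_iff.2 hxa, sup_bot_eq, if_neg hae, add_zero]
    · have hxa' := hx.not_le_iff_disjoint.1 hxa
      have hae : a ≤ e ⊔ x ↔ a ≤ e :=
        ⟨hxa'.symm.left_le_of_le_sup_right, le_sup_of_le_left⟩
      have hxea : ¬ x ≤ e \ a := fun h => he (h.trans sdiff_le)
      rw [hxa'.symm.symmDiff_eq_sup, if_pos le_sup_right, if_neg hxea,
        sup_sdiff, hxa'.sdiff_eq_left, hae]
      simp

def pderivDerivation [CharP R 2] {x : α} (hx : IsAtom x) :
    Derivation ℤ (TruncPoly α R) (TruncPoly α R) :=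
  Derivation.mk' (pderiv x).toIntLinearMap fun p q => by
    rw [AddMonoidHom.coe_toIntLinearMap, pderiv_mul hx, smul_eq_mul, smul_eq_mul, mul_comm q,
      add_comm]

theorem pderivDerivation_apply [CharP R 2] {x : α} (hx : IsAtom x) (p : TruncPoly α R) :
    pderivDerivation hx p = pderiv x p := rfl

/-- In characteristic `2`, `(1 + x) ∂ₓ` is the Euler derivation `g ∂_g` of `g = 1 + x`, which
satisfies `g² = 1`. -/
def eulerDerivation [CharP R 2] {x : α} (hx : IsAtom x) :
    Derivation ℤ (TruncPoly α R) (TruncPoly α R) :=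
  (1 + monomial x : TruncPoly α R) • pderivDerivation hx

theorem eulerDerivation_comm [CharP R 2] {x y : α} (hx : IsAtom x) (hy : IsAtom y)
    (p : TruncPoly α R) :
    eulerDerivation hx (eulerDerivation hy p) = eulerDerivation hy (eulerDerivation hx p) := by
  obtain rfl | hxy := eq_or_ne x y
  · rfl
  have pderiv_one_add_monomial {a b : α} (ha : IsAtom a) (hb : IsAtom b) (hab : a ≠ b) :
      pderivDerivation ha (1 + monomial b : TruncPoly α R) = 0 := by
    rw [map_add, Derivation.map_one_eq_zero, zero_add, pderivDerivation_apply,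
      pderiv_monomial_of_not_le fun h => hab ((hb.le_iff_eq ha.1).1 h)]
  exact Derivation.smul_apply_smul_apply_comm (pderiv_pderiv_comm hx hy)
    (pderiv_one_add_monomial hy hx hxy.symm) (pderiv_one_add_monomial hx hy hxy) p

end

end TruncPoly

section TruncatedAlgebra

open TruncPoly

def pAtom (i : Fin m) : Expo m := (Function.update ⊥ i true, ⊥)

def qAtom (i : Fin m) : Expo m := (⊥, Function.update ⊥ i true)

theorem isAtom_pAtom (i : Fin m) : IsAtom (pAtom i) := by
  rw [← bot_covBy_iff]
  show ((⊥, ⊥) : Expo m) ⋖ (Function.update ⊥ i true, ⊥)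
  rw [Prod.mk_covBy_mk_iff_left, bot_covBy_iff]
  exact Pi.isAtom_single isAtom_top

theorem isAtom_qAtom (i : Fin m) : IsAtom (qAtom i) := by
  rw [← bot_covBy_iff]
  show ((⊥, ⊥) : Expo m) ⋖ (⊥, Function.update ⊥ i true)
  rw [Prod.mk_covBy_mk_iff_right, bot_covBy_iff]
  exact Pi.isAtom_single isAtom_top

theorem pAtom_le_iff (i : Fin m) (e : Expo m) : pAtom i ≤ e ↔ e.1 i = true := by
  simp [pAtom, Prod.le_def, update_le_iff, Bool.le_iff_imp]

theorem qAtom_le_iff (i : Fin m) (e : Expo m) : qAtom i ≤ e ↔ e.2 i = true := by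
  simp [qAtom, Prod.le_def, update_le_iff, Bool.le_iff_imp]

theorem sup_pAtom (i : Fin m) (e : Expo m) : e ⊔ pAtom i = (Function.update e.1 i true, e.2) := by
  ext j <;> by_cases h : j = i <;> simp [pAtom, h]

theorem sup_qAtom (i : Fin m) (e : Expo m) : e ⊔ qAtom i = (e.1, Function.update e.2 i true) := by
  ext j <;> by_cases h : j = i <;> simp [qAtom, h]

theorem sdiff_pAtom (i : Fin m) (e : Expo m) :
    e \ pAtom i = (Function.update e.1 i false, e.2) := by
  ext j <;> by_cases h : j = i <;> simp [pAtom, h, sdiff_eq]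

theorem sdiff_qAtom (i : Fin m) (e : Expo m) :
    e \ qAtom i = (e.1, Function.update e.2 i false) := by
  ext j <;> by_cases h : j = i <;> simp [qAtom, h, sdiff_eq]

theorem disjoint_and_sup_eq_iff_forall (a b e : Expo m) :
    Disjoint a b ∧ a ⊔ b = e ↔ ∀ i,
      ¬(a.1 i = true ∧ b.1 i = true) ∧ ((a.1 i = true ∨ b.1 i = true) ↔ e.1 i = true)
        ∧ ¬(a.2 i = true ∧ b.2 i = true) ∧ ((a.2 i = true ∨ b.2 i = true) ↔ e.2 i = true) := by
  have bool (x y z : Bool) : (¬(x = true ∧ y = true) ∧ ((x = true ∨ y = true) ↔ z = true)) ↔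
      Disjoint x y ∧ x ⊔ y = z := by
    rw [disjoint_iff]; revert x y z; decide
  simp only [← and_assoc, bool, Prod.disjoint_iff, Pi.disjoint_iff, Prod.ext_iff, funext_iff,
    Prod.fst_sup, Prod.snd_sup, Pi.sup_apply, forall_and]
  tauto

theorem of_mulO (f g : TO K m) : of (mulO f g) = of f * of g := by
  ext e
  exact sum_congr rfl fun a _ => sum_congr rfl fun b _ => by
    congr 1; exact propext (disjoint_and_sup_eq_iff_forall a b e).symm

theorem of_dp (i : Fin m) (f : TO K m) : of (dp i f) = pderiv (pAtom i) (of f) := by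
  ext e
  simp only [coeff_pderiv, coeff_of, dp, pAtom_le_iff, sup_pAtom]
  cases e.1 i <;> rfl

theorem of_dq (i : Fin m) (f : TO K m) : of (dq i f) = pderiv (qAtom i) (of f) := by
  ext e
  simp only [coeff_pderiv, coeff_of, dq, qAtom_le_iff, sup_qAtom]
  cases e.2 i <;> rfl

theorem of_mp (i : Fin m) (f : TO K m) : of (mp i f) = (1 + monomial (pAtom i)) * of f := by
  ext e
  simp [add_mul, coeff_monomial_mul, mp, pAtom_le_iff, sdiff_pAtom]

theorem of_mq (i : Fin m) (f : TO K m) : of (mq i f) = (1 + monomial (qAtom i)) * of f := by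
  ext e
  simp [add_mul, coeff_monomial_mul, mq, qAtom_le_iff, sdiff_qAtom]

theorem of_br13 [CharP K 2] (f g : TO K m) :
    of (br13 f g) = poissonBracket (fun i => eulerDerivation (isAtom_pAtom i))
      (fun i => eulerDerivation (isAtom_qAtom i)) (of f) (of g) := by
  rw [br13, map_sum, poissonBracket]
  refine sum_congr rfl fun i _ => ?_
  simp only [of_mp, of_mq, map_add, of_mulO, of_dp, of_dq, eulerDerivation, Derivation.smul_apply,
    smul_eq_mul, pderivDerivation_apply, TruncPoly.sub_eq_add]
  ring

end TruncatedAlgebra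

theorem stmt13_general (K : Type*) [Field K] [CharP K 2] (m : ℕ) :
    (∀ f : TO K m, br13 f f = 0) ∧
    (∀ f g h : TO K m,
      br13 (br13 f g) h + br13 (br13 g h) f + br13 (br13 h f) g = 0) := by
  open TruncPoly in
  refine ⟨fun f => of.injective ?_, fun f g h => of.injective ?_⟩
  · rw [of_br13, poissonBracket_self, map_zero]
  · simp only [map_add, of_br13, map_zero]
    exact poissonBracket_jacobi _ _ (fun _ _ => eulerDerivation_comm _ _)
      (fun _ _ => eulerDerivation_comm _ _) (fun _ _ => eulerDerivation_comm _ _) _ _ _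

/-- over a field of characteristic 2, this bracket defines a Lie
algebra structure on the truncated polynomial algebra. -/
theorem stmt13 (K : Type*) [Field K] [CharP K 2] (m : ℕ) (hm : 1 ≤ m) :
    (∀ f : TO K m, br13 f f = 0) ∧
    (∀ f g h : TO K m,
      br13 (br13 f g) h + br13 (br13 g h) f + br13 (br13 h f) g = 0) :=
  stmt13_general K m
end
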